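/- arXiv:1512.03408 — 2 statements merged into one kernel-verified Lean document; each statement's English description precedes it below -/
import Mathlib

section
/- Let N be a complete nest and V a weakly closed T(N)-bimodule in B(H). A rank-one operator x ⊗ y lies in V if and only if P_y B(H) P̂_x^⊥ ⊆ V. -/
/-- The order on orthogonal projections: `P ≤ Q` encoded as `P*Q = P ∧ Q*P = P`. -/
def opLe {H : Type} [NormedAddCommGroup H] [InnerProductSpace ℂ H]
    (P Q : H →L[ℂ] H) : Prop := P * Q = P ∧ Q * P = P

/-- Strict order on projections. -/
def opLt {H : Type} [NormedAddCommGroup H] [InnerProductSpace ℂ H]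
    (P Q : H →L[ℂ] H) : Prop := opLe P Q ∧ P ≠ Q

/-- A complete nest: a totally ordered complete sublattice of the lattice of orthogonal
projections on `H`, containing `0` and `1`.  Completeness means that every subset has a
least upper bound and a greatest lower bound (computed in the full projection lattice)
belonging to the nest. -/
structure IsNest {H : Type} [NormedAddCommGroup H] [InnerProductSpace ℂ H] [CompleteSpace H]
    (N : Set (H →L[ℂ] H)) : Prop where
  proj : ∀ P ∈ N, IsSelfAdjoint P ∧ IsIdempotentElem P
  zero_mem : (0 : H →L[ℂ] H) ∈ N
  one_mem : (1 : H →L[ℂ] H) ∈ N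
  total : ∀ P ∈ N, ∀ Q ∈ N, opLe P Q ∨ opLe Q P
  complete_sup : ∀ S ⊆ N, ∃ B ∈ N, (∀ P ∈ S, opLe P B) ∧
    ∀ C : H →L[ℂ] H, IsSelfAdjoint C → IsIdempotentElem C → (∀ P ∈ S, opLe P C) → opLe B C
  complete_inf : ∀ S ⊆ N, ∃ B ∈ N, (∀ P ∈ S, opLe B P) ∧
    ∀ C : H →L[ℂ] H, IsSelfAdjoint C → IsIdempotentElem C → (∀ P ∈ S, opLe C P) → opLe C B

/-- `B` is the supremum, taken in the nest `N`, of the subset `S` of `N`. -/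
def IsNestSup {H : Type} [NormedAddCommGroup H] [InnerProductSpace ℂ H]
    (N S : Set (H →L[ℂ] H)) (B : H →L[ℂ] H) : Prop :=
  B ∈ N ∧ (∀ P ∈ S, opLe P B) ∧ ∀ C ∈ N, (∀ P ∈ S, opLe P C) → opLe B C

/-- `B` is the infimum, taken in the nest `N`, of the subset `S` of `N`. -/
def IsNestInf {H : Type} [NormedAddCommGroup H] [InnerProductSpace ℂ H]
    (N S : Set (H →L[ℂ] H)) (B : H →L[ℂ] H) : Prop :=
  B ∈ N ∧ (∀ P ∈ S, opLe B P) ∧ ∀ C ∈ N, (∀ P ∈ S, opLe C P) → opLe C B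

/-- The nest algebra `T(N)` of a nest `N`: all `T` with `P^⊥ T P = 0` for all `P ∈ N`. -/
def nestAlg {H : Type} [NormedAddCommGroup H] [InnerProductSpace ℂ H]
    (N : Set (H →L[ℂ] H)) : Set (H →L[ℂ] H) :=
  {T | ∀ P ∈ N, (1 - P) * T * P = 0}

/-- A subset of `B(H)` is weakly closed if it is closed in the weak operator topology. -/
def WClosed {H : Type} [NormedAddCommGroup H] [InnerProductSpace ℂ H] [CompleteSpace H]
    (M : Set (H →L[ℂ] H)) : Prop :=
  IsClosed ((ContinuousLinearMapWOT.ofCLM : (H →L[ℂ] H) → (H →WOT[ℂ] H)) '' M)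

/-- The closure of a subset of `B(H)` in the weak operator topology. -/
def wClosure {H : Type} [NormedAddCommGroup H] [InnerProductSpace ℂ H] [CompleteSpace H]
    (S : Set (H →L[ℂ] H)) : Set (H →L[ℂ] H) :=
  (ContinuousLinearMapWOT.ofCLM : (H →L[ℂ] H) → (H →WOT[ℂ] H)) ⁻¹' (closure ((ContinuousLinearMapWOT.ofCLM : (H →L[ℂ] H) → (H →WOT[ℂ] H)) '' S))

/-- The rank-one operator `x ⊗ y : z ↦ ⟨z,x⟩y` (inner product linear in its first variable,
i.e. `⟨z,x⟩ = ⟪x,z⟫` in Mathlib's convention). -/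
noncomputable def rankOne {H : Type} [NormedAddCommGroup H] [InnerProductSpace ℂ H]
    (x y : H) : H →L[ℂ] H :=
  (innerSL ℂ x).smulRight y
/-!
Let `B` be the supremum of the `P ∈ N` with `P y ≠ y`. If `B y ≠ y`, a rank-one operator built
from `y - B y` lies in `T(N)` and maps `y` to any `v` with `P_y v = v`; otherwise `P_y ≤ B`, and
the range of each such `P` lies in the orbit `T(N) y`, so `P_y H` lies in its closure. For the
nest `N^⊥`, whose nest algebra is `T(N)*`, this says that `P̂_x^⊥ H` lies in the closure of
`T(N)* x`. Hence every `u ⊗ v` with `u ∈ P̂_x^⊥ H` and `v ∈ P_y H` is a norm limit of operators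
`T (x ⊗ y) S = (S* x) ⊗ (T y)` of `V`, and `P_y A P̂_x^⊥` is the weak limit of the sums
`P_y E A P̂_x^⊥` of such operators, `E` running over finite-rank projections.
-/

open scoped InnerProductSpace
open Filter Topology ContinuousLinearMap

section

variable {H : Type} [NormedAddCommGroup H] [InnerProductSpace ℂ H]

lemma rankOne_eq_innerProductSpace_rankOne (x y : H) :
    rankOne x y = InnerProductSpace.rankOne ℂ y x := rfl

lemma continuous_rankOne : Continuous fun p : H × H => rankOne p.1 p.2 :=
  (smulRightL ℂ H H).continuous₂.comp ((innerSL ℂ).continuous.prodMap continuous_id)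

lemma mul_rankOne (T : H →L[ℂ] H) (x y : H) : T * rankOne x y = rankOne x (T y) :=
  InnerProductSpace.comp_rankOne y x T

lemma rankOne_mul [CompleteSpace H] (S : H →L[ℂ] H) (x y : H) :
    rankOne x y * S = rankOne (adjoint S x) y :=
  InnerProductSpace.rankOne_comp y x S

lemma IsIdempotentElem.apply_apply {P : H →L[ℂ] H} (hP : IsIdempotentElem P) (z : H) :
    P (P z) = P z :=
  DFunLike.congr_fun hP.eq z

namespace opLe

variable {P Q : H →L[ℂ] H}

lemma apply_apply_left (h : opLe P Q) (z : H) : Q (P z) = P z :=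
  DFunLike.congr_fun h.2 z

lemma apply_apply_right (h : opLe P Q) (z : H) : P (Q z) = P z :=
  DFunLike.congr_fun h.1 z

lemma one_sub (h : opLe P Q) : opLe (1 - Q) (1 - P) := by
  constructor <;> simp only [mul_sub, sub_mul, one_mul, mul_one, h.1, h.2] <;> abel

lemma of_one_sub (h : opLe (1 - Q) (1 - P)) : opLe P Q := by
  simpa using h.one_sub

end opLe

section WClosed

variable [CompleteSpace H] {M : Set (H →L[ℂ] H)}

lemma WClosed.isClosed (hM : WClosed M) : IsClosed M := by
  have := hM.preimage ContinuousLinearMapWOT.continuous_ofCLM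
  rwa [Set.preimage_image_eq _ ContinuousLinearMapWOT.ofCLM_injective] at this

lemma WClosed.mem_of_tendsto (hM : WClosed M) {ι : Type*} {l : Filter ι} [l.NeBot]
    {f : ι → H →L[ℂ] H} (hf : ∀ᶠ i in l, f i ∈ M) {T : H →L[ℂ] H}
    (hT : ∀ u v : H, Tendsto (fun i => ⟪u, f i v⟫_ℂ) l (𝓝 ⟪u, T v⟫_ℂ)) : T ∈ M := by
  have hlim : Tendsto (fun i => ContinuousLinearMapWOT.ofCLM (f i)) l
      (𝓝 (ContinuousLinearMapWOT.ofCLM T)) :=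
    ContinuousLinearMapWOT.tendsto_iff_forall_inner_apply_tendsto.2 fun v u => hT u v
  obtain ⟨S, hS, hST⟩ := IsClosed.mem_of_tendsto hM hlim (hf.mono fun i hi => ⟨f i, hi, rfl⟩)
  rwa [← ContinuousLinearMapWOT.ofCLM_injective hST]

lemma WClosed.mul_mul_mem {V : Submodule ℂ (H →L[ℂ] H)} (hV : WClosed (V : Set (H →L[ℂ] H)))
    {L R : H →L[ℂ] H} (h : ∀ a b : H, L * rankOne a b * R ∈ V) (A : H →L[ℂ] H) :
    L * A * R ∈ V := by
  let E : Finset H → H →L[ℂ] H := fun s => (Submodule.span ℂ (s : Set H)).starProjection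
  refine hV.mem_of_tendsto (l := atTop) (f := fun s => L * E s * A * R)
    (Eventually.of_forall fun s => ?_) fun u v => ?_
  · let b := stdOrthonormalBasis ℂ (Submodule.span ℂ (s : Set H))
    simp only [E, b.starProjection_eq_sum_rankOne, Finset.mul_sum, Finset.sum_mul]
    refine V.sum_mem fun j _ => ?_
    rw [← rankOne_eq_innerProductSpace_rankOne, mul_assoc L, rankOne_mul]
    exact h _ _
  · refine tendsto_const_nhds.congr' ?_
    filter_upwards [eventually_ge_atTop {adjoint L u}] with s hs
    have hmem : adjoint L u ∈ Submodule.span ℂ (s : Set H) :=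
      Submodule.subset_span (hs (Finset.mem_singleton_self _))
    calc ⟪u, (L * A * R) v⟫_ℂ = ⟪adjoint L u, A (R v)⟫_ℂ := adjoint_inner_left L _ _ |>.symm
      _ = ⟪E s (adjoint L u), A (R v)⟫_ℂ := by rw [Submodule.starProjection_eq_self_iff.2 hmem]
      _ = ⟪u, (L * E s * A * R) v⟫_ℂ := by
        rw [Submodule.inner_starProjection_left_eq_right, adjoint_inner_left]; rfl

end WClosed

/-- The nest `N^⊥ = {P^⊥ : P ∈ N}`. -/
def orthNest (N : Set (H →L[ℂ] H)) : Set (H →L[ℂ] H) := {P | 1 - P ∈ N}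

lemma one_sub_mem_orthNest {N : Set (H →L[ℂ] H)} {P : H →L[ℂ] H} :
    1 - P ∈ orthNest N ↔ P ∈ N := by
  simp [orthNest]

lemma IsNest.orthNest [CompleteSpace H] {N : Set (H →L[ℂ] H)} (hN : IsNest N) :
    IsNest (orthNest N) where
  proj P hP := ⟨by simpa using (IsSelfAdjoint.one _).sub (hN.proj _ hP).1,
    by simpa using (hN.proj _ hP).2.one_sub⟩
  zero_mem := by simpa [_root_.orthNest] using hN.one_mem
  one_mem := by simpa [_root_.orthNest] using hN.zero_mem
  total P hP Q hQ := ((hN.total _ hQ _ hP).imp opLe.of_one_sub opLe.of_one_sub)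
  complete_sup S hS := by
    obtain ⟨B, hBN, hB, hBglb⟩ := hN.complete_inf {P | 1 - P ∈ S}
      fun P hP => by simpa [_root_.orthNest] using hS hP
    refine ⟨1 - B, one_sub_mem_orthNest.2 hBN, fun P hP => opLe.of_one_sub ?_, fun C hCsa hCid hC =>
      opLe.of_one_sub ?_⟩
    · simpa using hB (1 - P) (by simpa using hP)
    · simpa using hBglb (1 - C) ((IsSelfAdjoint.one _).sub hCsa) hCid.one_sub
        fun P hP => by simpa using (hC _ hP).one_sub
  complete_inf S hS := by
    obtain ⟨B, hBN, hB, hBlub⟩ := hN.complete_sup {P | 1 - P ∈ S}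
      fun P hP => by simpa [_root_.orthNest] using hS hP
    refine ⟨1 - B, one_sub_mem_orthNest.2 hBN, fun P hP => opLe.of_one_sub ?_, fun C hCsa hCid hC =>
      opLe.of_one_sub ?_⟩
    · simpa using hB (1 - P) (by simpa using hP)
    · simpa using hBlub (1 - C) ((IsSelfAdjoint.one _).sub hCsa) hCid.one_sub
        fun P hP => by simpa using (hC _ hP).one_sub

lemma star_one_sub_mul_mul [CompleteSpace H] {Q : H →L[ℂ] H} (hQ : IsSelfAdjoint Q)
    (T : H →L[ℂ] H) : star ((1 - Q) * T * Q) = Q * adjoint T * (1 - Q) := by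
  simp [star_mul, hQ.star_eq, star_eq_adjoint, mul_assoc]

lemma mem_nestAlg_orthNest_iff [CompleteSpace H] {N : Set (H →L[ℂ] H)}
    (hN : ∀ P ∈ N, IsSelfAdjoint P) {T : H →L[ℂ] H} :
    T ∈ nestAlg (orthNest N) ↔ adjoint T ∈ nestAlg N := by
  refine ⟨fun hT P hP => ?_, fun hT P hP => ?_⟩
  · rw [← star_eq_zero, star_one_sub_mul_mul (hN P hP), adjoint_adjoint]
    simpa using hT _ (one_sub_mem_orthNest.2 hP)
  · have hPsa : IsSelfAdjoint P := by simpa using (IsSelfAdjoint.one _).sub (hN _ hP)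
    rw [← star_eq_zero, star_one_sub_mul_mul hPsa]
    simpa using hT _ hP

lemma rankOne_mem_nestAlg [CompleteSpace H] {N : Set (H →L[ℂ] H)}
    (hN : ∀ P ∈ N, IsSelfAdjoint P) {a b : H} (h : ∀ P ∈ N, P a = 0 ∨ P b = b) :
    rankOne a b ∈ nestAlg N := by
  intro P hP
  rw [mul_rankOne, rankOne_mul, (hN P hP).adjoint_eq]
  rcases h P hP with ha | hb
  · simp [ha, rankOne_eq_innerProductSpace_rankOne]
  · simp [hb, rankOne_eq_innerProductSpace_rankOne]

def nestOrbit (N : Set (H →L[ℂ] H)) (y : H) : Submodule ℂ H where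
  carrier := {w | ∃ T ∈ nestAlg N, T y = w}
  add_mem' := by
    rintro _ _ ⟨S, hS, rfl⟩ ⟨T, hT, rfl⟩
    exact ⟨S + T, fun P hP => by simp [mul_add, add_mul, hS P hP, hT P hP], rfl⟩
  zero_mem' := ⟨0, fun P _ => by simp, rfl⟩
  smul_mem' := by
    rintro c _ ⟨T, hT, rfl⟩
    exact ⟨c • T, fun P hP => by simp [hT P hP], rfl⟩

/-- With `g = y - P y`, the operator `g ⊗ ⟪g, y⟫⁻¹ w` lies in `T(N)` and maps `y` to `w`. -/
lemma mem_nestOrbit [CompleteSpace H] {N : Set (H →L[ℂ] H)} (hN : IsNest N)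
    {P : H →L[ℂ] H} (hP : P ∈ N) {y : H} (hy : P y ≠ y) {w : H}
    (hw : ∀ Q ∈ N, ¬ opLe Q P → Q w = w) : w ∈ nestOrbit N y := by
  set g := y - P y with hg
  have hPg : P g = 0 := by rw [hg, map_sub, (hN.proj P hP).2.apply_apply, sub_self]
  have hgy : ⟪g, y⟫_ℂ = ⟪g, g⟫_ℂ := by
    conv_lhs => rw [← sub_add_cancel y (P y), ← hg]
    rw [inner_add_right, ← adjoint_inner_left P, (hN.proj P hP).1.adjoint_eq, hPg, inner_zero_left,
      add_zero]
  have hgy0 : ⟪g, y⟫_ℂ ≠ 0 := by rw [hgy, inner_self_ne_zero, hg, sub_ne_zero]; exact hy.symm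
  refine ⟨rankOne g ((⟪g, y⟫_ℂ)⁻¹ • w), rankOne_mem_nestAlg (fun Q hQ => (hN.proj Q hQ).1)
    fun Q hQ => ?_, ?_⟩
  · by_cases hQP : opLe Q P
    · left
      rw [← hQP.apply_apply_right, hPg, map_zero]
    · right
      rw [map_smul, hw Q hQ hQP]
  · simp [rankOne_eq_innerProductSpace_rankOne, smul_smul, hgy0]

/-- Compare `B` with the projection onto `K`. -/
lemma apply_mem_of_forall_apply_mem [CompleteSpace H] {D : Set (H →L[ℂ] H)}
    (hD : ∀ P ∈ D, IsSelfAdjoint P) {B : H →L[ℂ] H}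
    (hB : ∀ C : H →L[ℂ] H, IsSelfAdjoint C → IsIdempotentElem C → (∀ P ∈ D, opLe P C) → opLe B C)
    (K : Submodule ℂ H) [K.HasOrthogonalProjection] (hK : ∀ P ∈ D, ∀ z, P z ∈ K) (z : H) :
    B z ∈ K := by
  have hEsa := isSelfAdjoint_starProjection K
  have hE : ∀ P ∈ D, opLe P K.starProjection := by
    intro P hP
    have h : K.starProjection * P = P :=
      ContinuousLinearMap.ext fun z => Submodule.starProjection_eq_self_iff.2 (hK P hP z)
    refine ⟨?_, h⟩
    simpa [star_mul, (hD P hP).star_eq, hEsa.star_eq] using congrArg star h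
  rw [← (hB _ hEsa K.isIdempotentElem_starProjection hE).apply_apply_left z]
  exact K.starProjection_apply_mem _

lemma mem_closure_nestOrbit [CompleteSpace H] {N : Set (H →L[ℂ] H)} (hN : IsNest N)
    {y : H} {P₀ : H →L[ℂ] H} (hP₀ : ∀ Q ∈ N, Q y = y → opLe P₀ Q) {v : H} (hv : P₀ v = v) :
    v ∈ (nestOrbit N y).topologicalClosure := by
  obtain ⟨B, hBN, hB, hBlub⟩ := hN.complete_sup {P | P ∈ N ∧ P y ≠ y} fun P hP => hP.1
  by_cases hBy : B y = y
  · rw [← hv, ← (hP₀ B hBN hBy).apply_apply_left v]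
    refine apply_mem_of_forall_apply_mem (fun P hP => (hN.proj P hP.1).1) hBlub _
      (fun P hP z => ?_) _
    refine (nestOrbit N y).le_topologicalClosure (mem_nestOrbit hN hP.1 hP.2 fun Q hQ hQP => ?_)
    exact ((hN.total Q hQ P hP.1).resolve_left hQP).apply_apply_left z
  · refine (nestOrbit N y).le_topologicalClosure (mem_nestOrbit hN hBN hBy fun Q hQ hQB => ?_)
    have hQy : Q y = y := by
      by_contra h
      exact hQB (hB Q ⟨hQ, h⟩)
    rw [← hv, (hP₀ Q hQ hQy).apply_apply_left v]

lemma rankOne_mem_of_mem_closure [CompleteSpace H] {N : Set (H →L[ℂ] H)}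
    (hN : ∀ P ∈ N, IsSelfAdjoint P) {V : Submodule ℂ (H →L[ℂ] H)}
    (hVc : WClosed (V : Set (H →L[ℂ] H)))
    (hVl : ∀ T ∈ nestAlg N, ∀ A ∈ V, T * A ∈ V) (hVr : ∀ T ∈ nestAlg N, ∀ A ∈ V, A * T ∈ V)
    {x y : H} (hxy : rankOne x y ∈ V) {u v : H}
    (hu : u ∈ (nestOrbit (orthNest N) x).topologicalClosure)
    (hv : v ∈ (nestOrbit N y).topologicalClosure) : rankOne u v ∈ V := by
  have hclosed : IsClosed {p : H × H | rankOne p.1 p.2 ∈ V} :=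
    hVc.isClosed.preimage continuous_rankOne
  have hsub : (nestOrbit (orthNest N) x : Set H) ×ˢ (nestOrbit N y : Set H) ⊆
      {p : H × H | rankOne p.1 p.2 ∈ V} := by
    rintro ⟨_, _⟩ ⟨⟨S, hS, rfl⟩, ⟨T, hT, rfl⟩⟩
    have := hVr _ ((mem_nestAlg_orthNest_iff hN).1 hS) _ (hVl T hT _ hxy)
    rwa [mul_rankOne, rankOne_mul, adjoint_adjoint] at this
  rw [← SetLike.mem_coe, Submodule.topologicalClosure_coe] at hu hv
  exact hclosed.closure_subset_iff.2 hsub (show (u, v) ∈ _ by rw [closure_prod_eq]; exact ⟨hu, hv⟩)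

end

/-- For a weakly closed `T(N)`-bimodule `V`, a rank-one operator `x ⊗ y` lies in `V` if
and only if `P_y B(H) P̂_x^⊥ ⊆ V`. -/
theorem rank_one_mem_bimodule_iff
    {H : Type} [NormedAddCommGroup H] [InnerProductSpace ℂ H] [CompleteSpace H]
    (N : Set (H →L[ℂ] H)) (hN : IsNest N) (V : Submodule ℂ (H →L[ℂ] H))
    (hVc : WClosed (V : Set (H →L[ℂ] H)))
    (hVl : ∀ T ∈ nestAlg N, ∀ A ∈ V, T * A ∈ V)
    (hVr : ∀ T ∈ nestAlg N, ∀ A ∈ V, A * T ∈ V)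
    (x y : H) (Py Phx : H →L[ℂ] H)
    (hPy : IsNestInf N {Q | Q ∈ N ∧ Q y = y} Py) (hPyy : Py y = y)
    (hPhx : IsNestSup N {Q | Q ∈ N ∧ Q x = 0} Phx) (hPhxx : Phx x = 0) :
    rankOne x y ∈ V ↔ ∀ A : H →L[ℂ] H, Py * A * (1 - Phx) ∈ V := by
  have hPyid := (hN.proj Py hPy.1).2
  obtain ⟨hPhxsa, hPhxid⟩ := hN.proj Phx hPhx.1
  have hRsa : IsSelfAdjoint (1 - Phx) := (IsSelfAdjoint.one _).sub hPhxsa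
  have hcompress : ∀ a b : H, Py * rankOne a b * (1 - Phx) = rankOne ((1 - Phx) a) (Py b) := by
    intro a b
    rw [mul_rankOne, rankOne_mul, hRsa.adjoint_eq]
  refine ⟨fun hxy => hVc.mul_mul_mem fun a b => ?_, fun h => ?_⟩
  · rw [hcompress]
    refine rankOne_mem_of_mem_closure (fun P hP => (hN.proj P hP).1) hVc hVl hVr hxy ?_ ?_
    · refine mem_closure_nestOrbit hN.orthNest (fun Q hQ hQx => ?_) (hPhxid.one_sub.apply_apply a)
      refine opLe.of_one_sub ?_
      simpa using hPhx.2.1 (1 - Q) ⟨hQ, by simp [hQx]⟩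
    · exact mem_closure_nestOrbit hN (fun Q hQ hQy => hPy.2.1 Q ⟨hQ, hQy⟩) (hPyid.apply_apply b)
  · simpa [hcompress, hPyy, hPhxx] using h (rankOne x y)
end

section
/- Let N be a complete nest and L a weakly closed Lie T(N)-module. Define K(L) = K_V(L) + K_L(L) + K_D(L) + K_Δ(L) as the sum of the weak closures of the spans of {P T P^⊥}, {P^⊥ T P}, {P S P^⊥ T P}, {P^⊥ T P S P^⊥} respectively, over P ∈ N, T ∈ L, S ∈ T(N). Then [K(L), T(N)] ⊆ L. -/
/-!
For `P ∈ N` the corners `P T P^⊥` and `P^⊥ T P` of `T ∈ L` are linear combinations of `[T, P]`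
and `[[T, P], P]`, so they lie in `L`, and so do their brackets with `T(N)`. For the generator
`X = (P S P^⊥)(P^⊥ T P)` of `K_D(L)`, splitting `R ∈ T(N)` along `P` gives
`[X, R] = [X, P R P] + X P R P^⊥`: the first term is `-[[P^⊥ T P, P S P^⊥], P R P]`, the second lies
in the corner `P B(H) P^⊥`; `K_Δ(L)` is handled symmetrically with `P^⊥ R P^⊥`. The corner
`P B(H) P^⊥` lies in `L` as soon as `P^⊥ T P ≠ 0`: for corners `A, A'` (so `A A' = A' A = 0`) one
has `A b A' + A' b A = -[[b, A], A'] ∈ L`, which with `b = P^⊥ T P` produces every rank-one operator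
in the corner, and these span a weak-operator dense subspace of it. Finally `X ↦ [X, R]` is
weak-operator continuous, which carries everything from the generators to the closed spans.
-/

open Filter Topology ContinuousLinearMapWOT

/-- `L` is a Lie `𝒯`-module: `[L, 𝒯] ⊆ L`. -/
def BracketInvariant {𝕜 A : Type*} [Field 𝕜] [Ring A] [Module 𝕜 A]
    (L : Submodule 𝕜 A) (𝒯 : Set A) : Prop :=
  ∀ T ∈ L, ∀ S ∈ 𝒯, T * S - S * T ∈ L

namespace BracketInvariant

variable {𝕜 A : Type*} [Field 𝕜] [Ring A] [Module 𝕜 A] {L : Submodule 𝕜 A} {𝒯 : Set A}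
  {P T b X Y U : A}

theorem mul_mul_one_sub_mem [CharZero 𝕜] (hL : BracketInvariant L 𝒯) (hP : IsIdempotentElem P)
    (hP𝒯 : P ∈ 𝒯) (hT : T ∈ L) : P * T * (1 - P) ∈ L := by
  have hC := hL T hT P hP𝒯
  have hD := hL _ hC P hP𝒯
  have key : (T * P - P * T) * P - P * (T * P - P * T) - (T * P - P * T)
      = (2 : 𝕜) • (P * T * (1 - P)) := by
    simp only [mul_sub, sub_mul, mul_assoc, hP.eq, ← mul_assoc P P, mul_one, two_smul]
    abel
  exact (L.smul_mem_iff two_ne_zero).1 (key ▸ L.sub_mem hD hC)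

theorem one_sub_mul_mul_mem [CharZero 𝕜] (hL : BracketInvariant L 𝒯) (hP : IsIdempotentElem P)
    (hP𝒯 : P ∈ 𝒯) (hT : T ∈ L) : (1 - P) * T * P ∈ L := by
  have hC := hL T hT P hP𝒯
  have hD := hL _ hC P hP𝒯
  have key : (T * P - P * T) * P - P * (T * P - P * T) + (T * P - P * T)
      = (2 : 𝕜) • ((1 - P) * T * P) := by
    simp only [mul_sub, sub_mul, mul_assoc, hP.eq, ← mul_assoc P P, one_mul, two_smul]
    abel
  exact (L.smul_mem_iff two_ne_zero).1 (key ▸ L.add_mem hD hC)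

theorem mul_mul_add_mul_mul_mem (hL : BracketInvariant L 𝒯) (hb : b ∈ L) (hX : X ∈ 𝒯)
    (hY : Y ∈ 𝒯) (hXY : X * Y = 0) (hYX : Y * X = 0) : X * b * Y + Y * b * X ∈ L := by
  have key : X * b * Y + Y * b * X = -((b * X - X * b) * Y - Y * (b * X - X * b)) := by
    simp only [sub_mul, mul_sub, mul_assoc b X Y, ← mul_assoc Y, hXY, hYX, mul_zero, zero_mul]
    abel
  exact key ▸ L.neg_mem (hL _ (hL b hb X hX) Y hY)

theorem bracket_mul_mem (hL : BracketInvariant L 𝒯) (hb : b ∈ L) (hX : X ∈ 𝒯) (hU : U ∈ 𝒯)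
    (h₁ : b * X * U = 0) (h₂ : U * (b * X) = 0) : X * b * U - U * (X * b) ∈ L := by
  have key : X * b * U - U * (X * b) = -((b * X - X * b) * U - U * (b * X - X * b)) := by
    rw [sub_mul, mul_sub, h₁, h₂]
    abel
  exact key ▸ L.neg_mem (hL _ (hL b hb X hX) U hU)

theorem bracket_mul_mem' (hL : BracketInvariant L 𝒯) (hb : b ∈ L) (hX : X ∈ 𝒯) (hU : U ∈ 𝒯)
    (h₁ : X * b * U = 0) (h₂ : U * (X * b) = 0) : b * X * U - U * (b * X) ∈ L := by
  have key : b * X * U - U * (b * X) = (b * X - X * b) * U - U * (b * X - X * b) := by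
    rw [sub_mul, mul_sub, h₁, h₂]
    abel
  exact key ▸ hL _ (hL b hb X hX) U hU

end BracketInvariant

theorem ContinuousLinearMapWOT.continuous_mul_mul {𝕜 E : Type*} [NormedField 𝕜] [AddCommGroup E]
    [TopologicalSpace E] [Module 𝕜 E] [IsTopologicalAddGroup E] [ContinuousConstSMul 𝕜 E]
    (A B : E →WOT[𝕜] E) : Continuous fun Z : E →WOT[𝕜] E => A * Z * B :=
  continuous_of_dual_apply_continuous fun x y => by
    simpa using continuous_dual_apply (B x) (y.comp (toCLM A))

section RankOne

/- Here `rankOne 𝕜 x y` is Mathlib's `z ↦ ⟪y, z⟫ x`, which is `_root_.rankOne y x` in the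
opposite argument order. -/
open InnerProductSpace

variable {𝕜 E F : Type*} [RCLike 𝕜] [NormedAddCommGroup E] [InnerProductSpace 𝕜 E]
  [NormedAddCommGroup F] [InnerProductSpace 𝕜 F]

theorem ContinuousLinearMap.comp_starProjection_mem_span_rankOne (Z : E →L[𝕜] F)
    (U : Submodule 𝕜 E) [FiniteDimensional 𝕜 U] :
    Z ∘L U.starProjection ∈ Submodule.span 𝕜 (Set.range fun p : F × E => rankOne 𝕜 p.1 p.2) := by
  rw [(stdOrthonormalBasis 𝕜 U).starProjection_eq_sum_rankOne, comp_finsetSum]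
  exact Submodule.sum_mem _ fun i _ => Submodule.subset_span ⟨(_, _), (comp_rankOne _ _ _).symm⟩

theorem ContinuousLinearMap.tendsto_comp_starProjection_span (Z : E →L[𝕜] F) :
    Tendsto (fun s : Finset E => ofCLM (Z ∘L (Submodule.span 𝕜 (s : Set E)).starProjection))
      atTop (𝓝 (ofCLM Z)) := by
  refine tendsto_iff_forall_dual_apply_tendsto.2 fun x y => tendsto_const_nhds.congr' ?_
  filter_upwards [eventually_ge_atTop {x}] with s hs
  rw [ofCLM_apply, ofCLM_apply, comp_apply,
    Submodule.starProjection_eq_self_iff.2 (Submodule.subset_span (by simpa using hs))]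

theorem rankOne_mul_mul_rankOne (b : E →L[𝕜] E) (x y x' y' : E) :
    rankOne 𝕜 x y * b * rankOne 𝕜 x' y' = inner 𝕜 y (b x') • rankOne 𝕜 x y' := by
  rw [mul_assoc, ContinuousLinearMap.mul_def, ContinuousLinearMap.mul_def, comp_rankOne,
    rankOne_comp_rankOne]

variable [CompleteSpace E]

theorem mul_rankOne_mul (A B : E →L[𝕜] E) (x y : E) :
    A * rankOne 𝕜 x y * B = rankOne 𝕜 (A x) (ContinuousLinearMap.adjoint B y) := by
  rw [ContinuousLinearMap.mul_def, ContinuousLinearMap.mul_def, comp_rankOne, rankOne_comp]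

theorem rankOne_mul_rankOne_eq_zero {P : E →L[𝕜] E} (hP : IsSelfAdjoint P) {x y x' y' : E}
    (hy : P y = 0) (hx' : P x' = x') : rankOne 𝕜 x y * rankOne 𝕜 x' y' = 0 := by
  have horth : inner 𝕜 y x' = 0 := by
    rw [← hx', ← ContinuousLinearMap.coe_coe, ← hP.isSymmetric, ContinuousLinearMap.coe_coe, hy,
      inner_zero_left]
  rw [ContinuousLinearMap.mul_def, rankOne_comp_rankOne, horth, zero_smul]

theorem BracketInvariant.rankOne_mem {L : Submodule 𝕜 (E →L[𝕜] E)} {𝒯 : Set (E →L[𝕜] E)}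
    (hL : BracketInvariant L 𝒯) {P b : E →L[𝕜] E} (hP : IsStarProjection P)
    (h𝒯 : ∀ x y, P x = x → P y = 0 → rankOne 𝕜 x y ∈ 𝒯)
    (hb : b ∈ L) (hPb : P * b = 0) (hbP : b * P = b) (hb₀ : b ≠ 0)
    {x y : E} (hx : P x = x) (hy : P y = 0) : rankOne 𝕜 x y ∈ L := by
  have hsum : ∀ x y x' y' : E, P x = x → P y = 0 → P x' = x' → P y' = 0 →
      inner 𝕜 y (b x') • rankOne 𝕜 x y' + inner 𝕜 y' (b x) • rankOne 𝕜 x' y ∈ L := by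
    intro x y x' y' hx hy hx' hy'
    rw [← rankOne_mul_mul_rankOne, ← rankOne_mul_mul_rankOne]
    exact hL.mul_mul_add_mul_mul_mem hb (h𝒯 x y hx hy) (h𝒯 x' y' hx' hy')
      (rankOne_mul_rankOne_eq_zero hP.isSelfAdjoint hy hx')
      (rankOne_mul_rankOne_eq_zero hP.isSelfAdjoint hy' hx)
  obtain ⟨v, hv⟩ : ∃ v, b v ≠ 0 := by
    by_contra! h
    exact hb₀ (ContinuousLinearMap.ext h)
  set e := P v
  set f := b v
  have hPe : P e = e := DFunLike.congr_fun hP.isIdempotentElem.eq v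
  have hPf : P f = 0 := DFunLike.congr_fun hPb v
  have hc : inner 𝕜 f (b e) ≠ 0 := by
    rw [show b e = f from DFunLike.congr_fun hbP v]
    exact inner_self_ne_zero.2 hv
  have hef : rankOne 𝕜 e f ∈ L := by
    have h := hsum e f e f hPe hPf hPe hPf
    rw [← add_smul] at h
    exact (L.smul_mem_iff (by simpa [← two_mul] using hc)).1 h
  have h := L.sub_mem (hsum x f e y hx hPf hPe hy) (L.smul_mem (inner 𝕜 y (b x)) hef)
  rw [add_sub_cancel_right] at h
  exact (L.smul_mem_iff hc).1 h

end RankOne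

section WClosed

variable {H : Type} [NormedAddCommGroup H] [InnerProductSpace ℂ H] [CompleteSpace H]

theorem wClosed_iff {M : Set (H →L[ℂ] H)} : WClosed M ↔ IsClosed (toCLM ⁻¹' M) := by
  rw [WClosed, Set.image_eq_preimage_of_inverse (g := toCLM) (fun _ => rfl) (fun _ => rfl)]

theorem WClosed.preimage {M : Set (H →L[ℂ] H)} (hM : WClosed M) {f : (H →L[ℂ] H) → H →L[ℂ] H}
    (hf : Continuous fun Z : H →WOT[ℂ] H => ofCLM (f (toCLM Z))) : WClosed (f ⁻¹' M) :=
  wClosed_iff.2 ((wClosed_iff.1 hM).preimage hf)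

theorem WClosed.wClosure_subset {M S : Set (H →L[ℂ] H)} (hM : WClosed M) (hSM : S ⊆ M) :
    wClosure S ⊆ M := fun _ hZ =>
  ofCLM_injective.mem_set_image.1 (closure_minimal (Set.image_mono hSM) hM hZ)

theorem WClosed.mem_of_forall_rankOne_mem {M : Submodule ℂ (H →L[ℂ] H)}
    (hM : WClosed (M : Set (H →L[ℂ] H))) (hrankOne : ∀ x y, InnerProductSpace.rankOne ℂ x y ∈ M)
    (Z : H →L[ℂ] H) : Z ∈ M := by
  have hspan : Submodule.span ℂ (Set.range fun p : H × H => InnerProductSpace.rankOne ℂ p.1 p.2)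
      ≤ M := Submodule.span_le.2 (Set.range_subset_iff.2 fun p => hrankOne p.1 p.2)
  exact (wClosed_iff.1 hM).mem_of_tendsto Z.tendsto_comp_starProjection_span
    (.of_forall fun _ => hspan (Z.comp_starProjection_mem_span_rankOne _))

theorem WClosed.bracket_mem_of_mem_wClosure_span {L : Submodule ℂ (H →L[ℂ] H)}
    (hL : WClosed (L : Set (H →L[ℂ] H))) {R : H →L[ℂ] H} {S : Set (H →L[ℂ] H)}
    (hS : ∀ X ∈ S, X * R - R * X ∈ L) {Z : H →L[ℂ] H}
    (hZ : Z ∈ wClosure (Submodule.span ℂ S : Set (H →L[ℂ] H))) : Z * R - R * Z ∈ L := by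
  let M := L.comap (LinearMap.mulRight ℂ R - LinearMap.mulLeft ℂ R)
  have hM : WClosed (M : Set (H →L[ℂ] H)) := hL.preimage <|
    ((continuous_mul_mul 1 (ofCLM R)).sub (continuous_mul_mul (ofCLM R) 1)).congr fun Z => by simp
  exact hM.wClosure_subset (Submodule.span_le.2 hS) hZ

end WClosed

theorem mem_nestAlg_iff {H : Type} [NormedAddCommGroup H] [InnerProductSpace ℂ H]
    {N : Set (H →L[ℂ] H)} {U : H →L[ℂ] H} : U ∈ nestAlg N ↔ ∀ Q ∈ N, Q * U * Q = U * Q :=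
  forall₂_congr fun Q _ => by rw [sub_mul, one_mul, sub_mul, sub_eq_zero, eq_comm]

namespace IsNest

variable {H : Type} [NormedAddCommGroup H] [InnerProductSpace ℂ H] [CompleteSpace H]
  {N : Set (H →L[ℂ] H)} {L : Submodule ℂ (H →L[ℂ] H)} {P T S R U : H →L[ℂ] H}

theorem isStarProjection (hN : IsNest N) (hP : P ∈ N) : IsStarProjection P :=
  ⟨(hN.proj P hP).2, (hN.proj P hP).1⟩

theorem mem_nestAlg (hN : IsNest N) (hP : P ∈ N) : P ∈ nestAlg N := by
  refine mem_nestAlg_iff.2 fun Q hQ => ?_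
  rcases hN.total P hP Q hQ with ⟨hPQ, hQP⟩ | ⟨hQP, hPQ⟩
  · rw [hQP]
  · rw [hQP, (hN.isStarProjection hQ).isIdempotentElem.eq, hPQ]

theorem mul_mul_one_sub_mem_nestAlg (hN : IsNest N) (hP : P ∈ N) (X : H →L[ℂ] H) :
    P * X * (1 - P) ∈ nestAlg N := by
  refine mem_nestAlg_iff.2 fun Q hQ => ?_
  rcases hN.total P hP Q hQ with ⟨hPQ, hQP⟩ | ⟨hQP, hPQ⟩
  · rw [← mul_assoc, ← mul_assoc, hQP]
  · have h : (1 - P) * Q = 0 := by rw [sub_mul, one_mul, hPQ, sub_self]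
    simp only [mul_assoc, h, mul_zero]

theorem mul_mul_self_mem_nestAlg (hN : IsNest N) (hP : P ∈ N) (hU : U ∈ nestAlg N) :
    P * U * P ∈ nestAlg N := by
  refine mem_nestAlg_iff.2 fun Q hQ => ?_
  rcases hN.total P hP Q hQ with ⟨hPQ, hQP⟩ | ⟨hQP, hPQ⟩
  · rw [← mul_assoc, ← mul_assoc, hQP]
  · have hUQ := mem_nestAlg_iff.1 hU Q hQ
    have h₁ : Q * (P * U * P) * Q = Q * U * Q := by
      simp only [← mul_assoc, hQP]
      rw [mul_assoc _ P Q, hPQ]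
    have h₂ : P * U * P * Q = Q * U * Q := by
      rw [mul_assoc _ P Q, hPQ, mul_assoc, ← hUQ]
      simp only [← mul_assoc, hPQ]
    rw [h₁, h₂]

theorem one_sub_mul_mul_one_sub_mem_nestAlg (hN : IsNest N) (hP : P ∈ N) (hU : U ∈ nestAlg N) :
    (1 - P) * U * (1 - P) ∈ nestAlg N := by
  refine mem_nestAlg_iff.2 fun Q hQ => ?_
  rcases hN.total P hP Q hQ with ⟨hPQ, hQP⟩ | ⟨hQP, hPQ⟩
  · have hUQ : (1 - Q) * U * Q = 0 := hU Q hQ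
    have hUP : (1 - Q) * U * P = 0 := by rw [← hQP, ← mul_assoc, hUQ, zero_mul]
    have h₀ : (1 - Q) * U * (Q - P) = 0 := by rw [mul_sub, hUQ, hUP, sub_self]
    have e₁ : Q * (1 - P) = Q - P := by rw [mul_sub, mul_one, hQP]
    have e₂ : (1 - P) * Q = Q - P := by rw [sub_mul, one_mul, hPQ]
    calc Q * ((1 - P) * U * (1 - P)) * Q = Q * (1 - P) * U * ((1 - P) * Q) := by
          simp only [mul_assoc]
      _ = (Q - P) * U * (Q - P) := by rw [e₁, e₂]
      _ = (1 - Q) * U * (Q - P) + (Q - P) * U * (Q - P) := by rw [h₀, zero_add]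
      _ = (1 - P) * U * (1 - P) * Q := by
          rw [← add_mul, ← add_mul, sub_add_sub_cancel, ← e₂, mul_assoc _ (1 - P)]
  · have h : (1 - P) * Q = 0 := by rw [sub_mul, one_mul, hPQ, sub_self]
    simp only [mul_assoc, h, mul_zero]

theorem mul_mul_one_sub_mem_of_ne_zero (hN : IsNest N) (hLc : WClosed (L : Set (H →L[ℂ] H)))
    (hL : BracketInvariant L (nestAlg N)) (hP : P ∈ N) (hT : T ∈ L) (hT₀ : (1 - P) * T * P ≠ 0)
    (Z : H →L[ℂ] H) : P * Z * (1 - P) ∈ L := by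
  have hPs := hN.isStarProjection hP
  have hcorner : ∀ x y, P * InnerProductSpace.rankOne ℂ x y * (1 - P)
      = InnerProductSpace.rankOne ℂ (P x) ((1 - P) y) := fun x y => by
    rw [mul_rankOne_mul, hPs.one_sub.isSelfAdjoint.adjoint_eq]
  have hM : WClosed ((L.comap (LinearMap.mulLeftRight ℂ (P, 1 - P))) : Set (H →L[ℂ] H)) :=
    hLc.preimage (continuous_mul_mul (ofCLM P) (ofCLM (1 - P)))
  refine hM.mem_of_forall_rankOne_mem (fun x y => ?_) Z
  show P * InnerProductSpace.rankOne ℂ x y * (1 - P) ∈ L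
  rw [hcorner]
  refine hL.rankOne_mem hPs (fun x y hx hy => ?_)
    (hL.one_sub_mul_mul_mem hPs.isIdempotentElem (hN.mem_nestAlg hP) hT) ?_ ?_ hT₀
    (DFunLike.congr_fun hPs.isIdempotentElem.eq x) (DFunLike.congr_fun hPs.mul_one_sub_self y)
  · have hy' : (1 - P) y = y := by simp [hy]
    rw [← hx, ← hy', ← hcorner]
    exact hN.mul_mul_one_sub_mem_nestAlg hP _
  · simp only [← mul_assoc, hPs.mul_one_sub_self, zero_mul]
  · rw [mul_assoc, hPs.isIdempotentElem.eq]

theorem bracket_upper_mul_lower_mem (hN : IsNest N) (hLc : WClosed (L : Set (H →L[ℂ] H)))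
    (hL : BracketInvariant L (nestAlg N)) (hP : P ∈ N) (hT : T ∈ L) (hR : R ∈ nestAlg N) :
    P * S * (1 - P) * T * P * R - R * (P * S * (1 - P) * T * P) ∈ L := by
  have hPP := (hN.isStarProjection hP).isIdempotentElem
  have hPQ : ∀ Z, P * ((1 - P) * Z) = 0 := fun Z => by
    rw [← mul_assoc, hPP.mul_one_sub_self, zero_mul]
  have hQP : ∀ Z, (1 - P) * (P * Z) = 0 := fun Z => by
    rw [← mul_assoc, hPP.one_sub_mul_self, zero_mul]
  by_cases h₀ : (1 - P) * T * P = 0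
  · have hX : P * S * (1 - P) * T * P = P * S * ((1 - P) * T * P) := by simp only [mul_assoc]
    simp [hX, h₀]
  set X := P * S * (1 - P) * T * P with hXdef
  have hXP : X * P = X := by rw [hXdef, mul_assoc _ P P, hPP.eq]
  have hPX : P * X = X := by simp only [hXdef, ← mul_assoc, hPP.eq]
  have hRP : R * P = P * R * P := (mem_nestAlg_iff.1 hR P hP).symm
  have hXR : X * R = X * (P * R * P) + P * (S * (1 - P) * T * P * R) * (1 - P) := by
    calc X * R = X * (P * R * P + P * R * (1 - P)) := by
          rw [← mul_add, add_sub_cancel, mul_one, ← mul_assoc, hXP]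
      _ = X * (P * R * P) + X * P * R * (1 - P) := by rw [mul_add]; simp only [mul_assoc]
      _ = _ := by rw [hXP, hXdef]; simp only [mul_assoc]
  have hRX : R * X = P * R * P * X := by
    calc R * X = R * (P * X) := by rw [hPX]
      _ = _ := by rw [← mul_assoc, hRP]
  have hX : X = P * S * (1 - P) * ((1 - P) * T * P) := by
    simp only [hXdef, mul_assoc, ← mul_assoc (1 - P) (1 - P), hPP.one_sub.eq]
  rw [hXR, hRX, add_sub_right_comm]
  refine L.add_mem ?_ (hN.mul_mul_one_sub_mem_of_ne_zero hLc hL hP hT h₀ _)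
  rw [hX]
  exact hL.bracket_mul_mem (hL.one_sub_mul_mul_mem hPP (hN.mem_nestAlg hP) hT)
    (hN.mul_mul_one_sub_mem_nestAlg hP S) (hN.mul_mul_self_mem_nestAlg hP hR)
    (by simp only [mul_assoc, hQP, mul_zero]) (by simp only [mul_assoc, hPQ, mul_zero])

theorem bracket_lower_mul_upper_mem (hN : IsNest N) (hLc : WClosed (L : Set (H →L[ℂ] H)))
    (hL : BracketInvariant L (nestAlg N)) (hP : P ∈ N) (hT : T ∈ L) (hR : R ∈ nestAlg N) :
    (1 - P) * T * P * S * (1 - P) * R - R * ((1 - P) * T * P * S * (1 - P)) ∈ L := by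
  have hPP := (hN.isStarProjection hP).isIdempotentElem
  have hPQ : ∀ Z, P * ((1 - P) * Z) = 0 := fun Z => by
    rw [← mul_assoc, hPP.mul_one_sub_self, zero_mul]
  have hQP : ∀ Z, (1 - P) * (P * Z) = 0 := fun Z => by
    rw [← mul_assoc, hPP.one_sub_mul_self, zero_mul]
  by_cases h₀ : (1 - P) * T * P = 0
  · simp [h₀]
  set X := (1 - P) * T * P * S * (1 - P) with hXdef
  have hXQ : X * (1 - P) = X := by rw [hXdef, mul_assoc _ (1 - P) (1 - P), hPP.one_sub.eq]
  have hQX : (1 - P) * X = X := by simp only [hXdef, ← mul_assoc, hPP.one_sub.eq]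
  have hQR : (1 - P) * R * (1 - P) = (1 - P) * R := by
    rw [mul_sub, mul_one, hR P hP, sub_zero]
  have hXR : X * R = X * ((1 - P) * R * (1 - P)) := by
    rw [hQR, ← mul_assoc, hXQ]
  have hRX : R * X = P * (R * (1 - P) * ((1 - P) * T * P * S)) * (1 - P)
      + (1 - P) * R * (1 - P) * X := by
    calc R * X = (P * R * (1 - P) + (1 - P) * R * (1 - P)) * X := by
          rw [← add_mul, ← add_mul, add_sub_cancel, one_mul, mul_assoc, hQX]
      _ = _ := by rw [add_mul, hXdef]; simp only [mul_assoc]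
  have hX : X = (1 - P) * T * P * (P * S * (1 - P)) := by
    simp only [hXdef, mul_assoc, ← mul_assoc P P, hPP.eq]
  rw [hXR, hRX, sub_add_eq_sub_sub_swap]
  refine L.sub_mem ?_ (hN.mul_mul_one_sub_mem_of_ne_zero hLc hL hP hT h₀ _)
  rw [hX]
  exact hL.bracket_mul_mem' (hL.one_sub_mul_mul_mem hPP (hN.mem_nestAlg hP) hT)
    (hN.mul_mul_one_sub_mem_nestAlg hP S) (hN.one_sub_mul_mul_one_sub_mem_nestAlg hP hR)
    (by simp only [mul_assoc, hPQ, mul_zero]) (by simp only [mul_assoc, hQP, mul_zero])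

end IsNest

/-- With `K(L) = K_V(L) + K_L(L) + K_D(L) + K_Δ(L)` the sum of the weak closures of the
spans of `{PTP^⊥}`, `{P^⊥TP}`, `{PSP^⊥TP}`, `{P^⊥TPSP^⊥}` (over `P ∈ N`, `T ∈ L`,
`S ∈ T(N)`), one has `[K(L), T(N)] ⊆ L`. -/
theorem commutator_K_subset_L
    {H : Type} [NormedAddCommGroup H] [InnerProductSpace ℂ H] [CompleteSpace H]
    (N : Set (H →L[ℂ] H)) (hN : IsNest N) (L : Submodule ℂ (H →L[ℂ] H))
    (hLc : WClosed (L : Set (H →L[ℂ] H)))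
    (hLie : ∀ T ∈ L, ∀ S ∈ nestAlg N, T * S - S * T ∈ L) :
    ∀ a ∈ wClosure (Submodule.span ℂ
        {X : H →L[ℂ] H | ∃ P ∈ N, ∃ T ∈ L, X = P * T * (1 - P)} : Set (H →L[ℂ] H)),
    ∀ b ∈ wClosure (Submodule.span ℂ
        {X : H →L[ℂ] H | ∃ P ∈ N, ∃ T ∈ L, X = (1 - P) * T * P} : Set (H →L[ℂ] H)),
    ∀ c ∈ wClosure (Submodule.span ℂ
        {X : H →L[ℂ] H | ∃ P ∈ N, ∃ T ∈ L, ∃ S ∈ nestAlg N,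
          X = P * S * (1 - P) * T * P} : Set (H →L[ℂ] H)),
    ∀ d ∈ wClosure (Submodule.span ℂ
        {X : H →L[ℂ] H | ∃ P ∈ N, ∃ T ∈ L, ∃ S ∈ nestAlg N,
          X = (1 - P) * T * P * S * (1 - P)} : Set (H →L[ℂ] H)),
    ∀ R ∈ nestAlg N, (a + b + c + d) * R - R * (a + b + c + d) ∈ L := by
  intro a ha b hb c hc d hd R hR
  have hL : BracketInvariant L (nestAlg N) := hLie
  have ha' := hLc.bracket_mem_of_mem_wClosure_span (by
    rintro _ ⟨P, hP, T, hT, rfl⟩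
    exact hL _ (hL.mul_mul_one_sub_mem (hN.isStarProjection hP).isIdempotentElem
      (hN.mem_nestAlg hP) hT) R hR) ha
  have hb' := hLc.bracket_mem_of_mem_wClosure_span (by
    rintro _ ⟨P, hP, T, hT, rfl⟩
    exact hL _ (hL.one_sub_mul_mul_mem (hN.isStarProjection hP).isIdempotentElem
      (hN.mem_nestAlg hP) hT) R hR) hb
  have hc' := hLc.bracket_mem_of_mem_wClosure_span (by
    rintro _ ⟨P, hP, T, hT, S, -, rfl⟩
    exact hN.bracket_upper_mul_lower_mem hLc hL hP hT hR) hc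
  have hd' := hLc.bracket_mem_of_mem_wClosure_span (by
    rintro _ ⟨P, hP, T, hT, S, -, rfl⟩
    exact hN.bracket_lower_mul_upper_mem hLc hL hP hT hR) hd
  have hsum : (a + b + c + d) * R - R * (a + b + c + d)
      = (a * R - R * a) + (b * R - R * b) + (c * R - R * c) + (d * R - R * d) := by
    noncomm_ring
  rw [hsum]
  exact add_mem (add_mem (add_mem ha' hb') hc') hd'
end
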